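/- Let Λ ∈ (0,1] and ζ > 1 with ζ < 1/(1−Λ) (interpreted as ζ < +∞ when Λ = 1). Then the equation ζ = c·(1 − c·tanh(Λc))/(c − tanh(Λc)) has a unique solution c ∈ (0,1). -/

import Mathlib

/-!
Since `tanh (Λ c) < Λ c ≤ c`, clearing the denominator turns the equation into `h c = 0` with
`h c = (ζ - c²) tanh (Λ c) - (ζ - 1) c`. Now `h 0 = 0`, `h 1 = (ζ - 1)(tanh Λ - 1) < 0`, and
`h' 0 = Λ ζ - (ζ - 1) > 0` is exactly the condition `ζ < 1/(1 - Λ)`; so `h` becomes positive and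
then vanishes again in `(0, 1)`. Uniqueness: `h'` is strictly decreasing on `(0, 1)`, so `h` is
strictly concave on `[0, 1]` and cannot vanish at three points.
-/

open Real Set Filter Topology

namespace Real

theorem hasDerivAt_tanh (x : ℝ) : HasDerivAt tanh (1 - tanh x ^ 2) x := by
  have h := (hasDerivAt_sinh x).div (hasDerivAt_cosh x) (cosh_pos x).ne'
  rw [show sinh / cosh = tanh from funext fun y => (tanh_eq_sinh_div_cosh y).symm] at h
  refine h.congr_deriv ?_
  rw [tanh_eq_sinh_div_cosh]
  field_simp

theorem continuous_tanh : Continuous tanh :=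
  continuous_iff_continuousAt.2 fun x => (hasDerivAt_tanh x).continuousAt

theorem strictMono_tanh : StrictMono tanh :=
  strictMono_of_deriv_pos fun x => (hasDerivAt_tanh x).deriv ▸ sub_pos.2 (tanh_sq_lt_one x)

theorem tanh_pos {x : ℝ} (hx : 0 < x) : 0 < tanh x :=
  tanh_zero ▸ strictMono_tanh hx

theorem tanh_lt_self {x : ℝ} (hx : 0 < x) : tanh x < x := by
  have hmono : StrictMonoOn (fun y => y - tanh y) (Ici 0) := by
    refine strictMonoOn_of_deriv_pos (convex_Ici 0)
      (continuous_id.sub continuous_tanh).continuousOn fun y hy => ?_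
    rw [interior_Ici] at hy
    have hderiv : HasDerivAt (fun y => y - tanh y) (1 - (1 - tanh y ^ 2)) y :=
      (hasDerivAt_id' y).sub (hasDerivAt_tanh y)
    rw [hderiv.deriv]
    nlinarith [tanh_pos hy]
  simpa using hmono self_mem_Ici hx.le hx

end Real

theorem StrictConcaveOn.eq_of_apply_eq_of_apply_eq {𝕜 : Type*} [Field 𝕜] [LinearOrder 𝕜]
    [IsStrictOrderedRing 𝕜] {s : Set 𝕜} {f : 𝕜 → 𝕜} (hf : StrictConcaveOn 𝕜 s f) {a x y : 𝕜}
    (ha : a ∈ s) (hx : x ∈ s) (hy : y ∈ s) (hxa : x ≠ a) (hya : y ≠ a)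
    (hfx : f x = f a) (hfy : f y = f a) : x = y := by
  by_contra hxy
  rcases lt_or_gt_of_ne hxy with hxy | hyx
  · simpa [hfx, hfy] using hf.secant_strict_mono ha hx hy hxa hya hxy
  · simpa [hfx, hfy] using hf.secant_strict_mono ha hy hx hya hxa hyx

theorem HasDerivAt.eventually_nhdsGT_lt {f : ℝ → ℝ} {f' a : ℝ} (hf : HasDerivAt f f' a)
    (hf' : 0 < f') : ∀ᶠ x in 𝓝[>] a, f a < f x := by
  have hslope := (hasDerivAt_iff_tendsto_slope.1 hf).mono_left (nhdsGT_le_nhdsNE a)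
  filter_upwards [hslope.eventually (eventually_gt_nhds hf'), self_mem_nhdsWithin]
    with x hx hax
  exact (slope_pos_iff hax).1 hx

theorem exists_mem_Ioo_eq_of_hasDerivAt_pos {f : ℝ → ℝ} {f' a b : ℝ} (hab : a < b)
    (hf : ContinuousOn f (Icc a b)) (hfa : HasDerivAt f f' a) (hf' : 0 < f') (hfb : f b < f a) :
    ∃ c ∈ Ioo a b, f c = f a := by
  obtain ⟨x, hfx, hx⟩ := ((hfa.eventually_nhdsGT_lt hf').and (Ioo_mem_nhdsGT hab)).exists
  obtain ⟨c, hc, hfc⟩ := intermediate_value_Ioo' hx.2.le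
    (hf.mono (Icc_subset_Icc hx.1.le le_rfl)) ⟨hfb, hfx⟩
  exact ⟨c, ⟨hx.1.trans hc.1, hc.2⟩, hfc⟩

noncomputable def tanhResidual (Λ ζ c : ℝ) : ℝ :=
  (ζ - c ^ 2) * tanh (Λ * c) - (ζ - 1) * c

noncomputable def tanhResidualDeriv (Λ ζ c : ℝ) : ℝ :=
  Λ * (ζ - c ^ 2) * (1 - tanh (Λ * c) ^ 2) - 2 * c * tanh (Λ * c) - (ζ - 1)

section tanhResidual

variable {Λ ζ : ℝ}

theorem hasDerivAt_tanhResidual (Λ ζ c : ℝ) :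
    HasDerivAt (tanhResidual Λ ζ) (tanhResidualDeriv Λ ζ c) c := by
  have htanh : HasDerivAt (fun c => tanh (Λ * c)) ((1 - tanh (Λ * c) ^ 2) * Λ) c :=
    (hasDerivAt_tanh (Λ * c)).comp c ((hasDerivAt_id c).const_mul Λ |>.congr_deriv (mul_one Λ))
  have hsq : HasDerivAt (fun c : ℝ => ζ - c ^ 2) (-(2 * c)) c := by
    simpa using (hasDerivAt_pow 2 c).const_sub ζ
  exact ((hsq.mul htanh).sub ((hasDerivAt_id' c).const_mul (ζ - 1))).congr_deriv
    (by rw [tanhResidualDeriv]; ring)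

theorem continuous_tanhResidual (Λ ζ : ℝ) : Continuous (tanhResidual Λ ζ) :=
  continuous_iff_continuousAt.2 fun c => (hasDerivAt_tanhResidual Λ ζ c).continuousAt

theorem tanhResidual_zero : tanhResidual Λ ζ 0 = 0 := by
  simp [tanhResidual]

theorem tanhResidual_one_neg (hζ : 1 < ζ) : tanhResidual Λ ζ 1 < 0 := by
  have := tanh_lt_one Λ
  simp only [tanhResidual, mul_one]
  nlinarith

theorem tanhResidualDeriv_zero : tanhResidualDeriv Λ ζ 0 = Λ * ζ - (ζ - 1) := by
  simp [tanhResidualDeriv]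

theorem strictAntiOn_tanhResidualDeriv (hΛ : 0 < Λ) (hζ : 1 ≤ ζ) :
    StrictAntiOn (tanhResidualDeriv Λ ζ) (Ioo 0 1) := by
  intro x hx y hy hxy
  have htx := tanh_pos (mul_pos hΛ hx.1)
  have htxy := strictMono_tanh (mul_lt_mul_of_pos_left hxy hΛ)
  have hty := tanh_lt_one (Λ * y)
  have hprod : x * tanh (Λ * x) < y * tanh (Λ * y) :=
    mul_lt_mul'' hxy htxy hx.1.le htx.le
  have hsech : (ζ - y ^ 2) * (1 - tanh (Λ * y) ^ 2) < (ζ - x ^ 2) * (1 - tanh (Λ * x) ^ 2) :=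
    mul_lt_mul'' (by nlinarith [hx.1]) (by nlinarith) (by nlinarith [hy.2, hy.1])
      (by nlinarith)
  simp only [tanhResidualDeriv]
  nlinarith [mul_lt_mul_of_pos_left hsech hΛ]

theorem strictConcaveOn_tanhResidual (hΛ : 0 < Λ) (hζ : 1 ≤ ζ) :
    StrictConcaveOn ℝ (Icc 0 1) (tanhResidual Λ ζ) := by
  refine StrictAntiOn.strictConcaveOn_of_deriv (convex_Icc 0 1)
    (continuous_tanhResidual Λ ζ).continuousOn ?_
  rw [interior_Icc, funext fun c => (hasDerivAt_tanhResidual Λ ζ c).deriv]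
  exact strictAntiOn_tanhResidualDeriv hΛ hζ

theorem eq_div_iff_tanhResidual_eq_zero (hΛ0 : 0 < Λ) (hΛ1 : Λ ≤ 1) {c : ℝ} (hc : 0 < c) :
    ζ = c * (1 - c * tanh (Λ * c)) / (c - tanh (Λ * c)) ↔ tanhResidual Λ ζ c = 0 := by
  have hden : 0 < c - tanh (Λ * c) := by
    nlinarith [tanh_lt_self (mul_pos hΛ0 hc)]
  rw [eq_div_iff hden.ne', tanhResidual]
  constructor <;> intro h <;> linear_combination -h

end tanhResidual

theorem transcendental_eq_unique_sol_small_lambda (Λ ζ : ℝ)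
    (hΛ0 : 0 < Λ) (hΛ1 : Λ ≤ 1) (hζ : 1 < ζ)
    (hζΛ : Λ < 1 → ζ < 1 / (1 - Λ)) :
    ∃! c : ℝ, c ∈ Set.Ioo (0:ℝ) 1 ∧
      ζ = c * (1 - c * Real.tanh (Λ * c)) / (c - Real.tanh (Λ * c)) := by
  have hslope : 0 < tanhResidualDeriv Λ ζ 0 := by
    rw [tanhResidualDeriv_zero]
    rcases hΛ1.lt_or_eq with hlt | rfl
    · have := hζΛ hlt
      rw [lt_div_iff₀ (sub_pos.2 hlt)] at this
      linarith
    · linarith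
  obtain ⟨c, hc, hc0⟩ := exists_mem_Ioo_eq_of_hasDerivAt_pos one_pos
    (continuous_tanhResidual Λ ζ).continuousOn (hasDerivAt_tanhResidual Λ ζ 0) hslope
    ((tanhResidual_one_neg hζ).trans_eq tanhResidual_zero.symm)
  rw [tanhResidual_zero] at hc0
  refine ⟨c, ⟨hc, (eq_div_iff_tanhResidual_eq_zero hΛ0 hΛ1 hc.1).2 hc0⟩, ?_⟩
  rintro y ⟨hy, hyeq⟩
  rw [eq_div_iff_tanhResidual_eq_zero hΛ0 hΛ1 hy.1] at hyeq
  exact (strictConcaveOn_tanhResidual hΛ0 hζ.le).eq_of_apply_eq_of_apply_eq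
    (left_mem_Icc.2 zero_le_one) (Ioo_subset_Icc_self hy) (Ioo_subset_Icc_self hc)
    hy.1.ne' hc.1.ne' (hyeq.trans tanhResidual_zero.symm) (hc0.trans tanhResidual_zero.symm)
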